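/- Sum and difference formulas for the Lucas-Pantograph sine and cosine: for x, y ∈ ℂ and nonzero u, v ∈ ℂ, assuming the series defining sin_{s,t}(x,u), cos_{s,t}(x,u), sin_{s,t}(y,v) and cos_{s,t}(y,v) converge absolutely: (1) sin_{s,t}(x ⊕_{u,v} y) = sin_{s,t}(x,u)·cos_{s,t}(y,v) + cos_{s,t}(x,u)·sin_{s,t}(y,v); (2) sin_{s,t}(x ⊖_{u,v} y) = sin_{s,t}(x,u)·cos_{s,t}(y,v) − cos_{s,t}(x,u)·sin_{s,t}(y,v); (3) cos_{s,t}(x ⊕_{u,v} y) = cos_{s,t}(x,u)·cos_{s,t}(y,v) − sin_{s,t}(x,u)·sin_{s,t}(y,v); (4) cos_{s,t}(x ⊖_{u,v} y) = cos_{s,t}(x,u)·cos_{s,t}(y,v) + sin_{s,t}(x,u)·sin_{s,t}(y,v), with all binomial series on the left converging. -/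

import Mathlib

open scoped BigOperators

noncomputable section

/-- The Lucas sequence `{n}_{s,t}`. -/
def lucasSeq (s t : ℂ) : ℕ → ℂ
  | 0 => 0
  | 1 => 1
  | n + 2 => s * lucasSeq s t (n + 1) + t * lucasSeq s t n

/-- The Lucastorial `{n}_{s,t}!`. -/
def lucasFact (s t : ℂ) : ℕ → ℂ
  | 0 => 1
  | n + 1 => lucasFact s t n * lucasSeq s t (n + 1)

/-- The Lucasnomial coefficient `{n choose k}_{s,t}`. -/
def lucasBinom (s t : ℂ) (n k : ℕ) : ℂ :=
  lucasFact s t n / (lucasFact s t k * lucasFact s t (n - k))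

/-- The `(u,v)`-deformed Lucasnomial power `(x ⊕_{u,v} y)^{(n)}`. -/
def lucasPow (s t u v x y : ℂ) (n : ℕ) : ℂ :=
  ∑ k ∈ Finset.range (n + 1),
    lucasBinom s t n k * u ^ ((n - k).choose 2) * v ^ (k.choose 2) * x ^ (n - k) * y ^ k

/-- The Lucas-derivative with respect to the roots `p = φ`, `q = φ'`. -/
def lucasDeriv (p q : ℂ) (f : ℂ → ℂ) (x : ℂ) : ℂ :=
  (f (p * x) - f (q * x)) / ((p - q) * x)

/-- The Lucas-derivative, extended by `0` at `0`, as an operator suitable for iteration. -/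
def lucasDeriv0 (p q : ℂ) (f : ℂ → ℂ) : ℂ → ℂ :=
  fun x => if x = 0 then 0 else (f (p * x) - f (q * x)) / ((p - q) * x)

/-- The Lucas-Pantograph exponential `exp_{s,t}(z,u)`. -/
def lucasExp (s t u z : ℂ) : ℂ :=
  ∑' n : ℕ, u ^ (n.choose 2) * z ^ n / lucasFact s t n

/-- The Lucas-Pantograph sine `sin_{s,t}(z,u)`. -/
def lucasSin (s t u z : ℂ) : ℂ :=
  ∑' n : ℕ, (-1 : ℂ) ^ n * u ^ ((2 * n + 1).choose 2) * z ^ (2 * n + 1) / lucasFact s t (2 * n + 1)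

/-- The Lucas-Pantograph cosine `cos_{s,t}(z,u)`. -/
def lucasCos (s t u z : ℂ) : ℂ :=
  ∑' n : ℕ, (-1 : ℂ) ^ n * u ^ ((2 * n).choose 2) * z ^ (2 * n) / lucasFact s t (2 * n)

/-!
Put `a n = u ^ C(n,2) x ^ n / {n}!` and `b n = v ^ C(n,2) y ^ n / {n}!`; then
`(x ⊕_{u,v} y)^{(n)} / {n}!` is the Cauchy product `∑ₖ a (n - k) b k`. For an absolutely summable
`a` and `w ^ 2 = -1`, splitting `∑ wⁿ aₙ` into even and odd indices gives `C a + w S a`, where `C`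
and `S` are the alternating even and odd subseries. Multiplying the series at `w = i` and at
`w = -i` gives `C (a * b) ± i S (a * b) = (C a ± i S a) (C b ± i S b)`; half the sum and difference
of these are the cosine and sine addition formulas. Replacing `y` by `-y` turns `b n` into
`(-1) ^ n b n`, which fixes `C b` and negates `S b`.
-/

open Finset

-- For `a n = z ^ n / n !`, `cosPart a = cos z` and `sinPart a = sin z`.
def cosPart (a : ℕ → ℂ) : ℂ := ∑' m : ℕ, (-1 : ℂ) ^ m * a (2 * m)

def sinPart (a : ℕ → ℂ) : ℂ := ∑' m : ℕ, (-1 : ℂ) ^ m * a (2 * m + 1)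

def cauchyProduct (a b : ℕ → ℂ) (n : ℕ) : ℂ := ∑ k ∈ range (n + 1), a (n - k) * b k

section CosSinParts

variable {a b : ℕ → ℂ}

lemma norm_neg_one_pow_mul (z : ℂ) (m : ℕ) : ‖(-1 : ℂ) ^ m * z‖ = ‖z‖ := by
  simp

lemma summable_norm_of_even_odd (he : Summable fun m => ‖(-1 : ℂ) ^ m * a (2 * m)‖)
    (ho : Summable fun m => ‖(-1 : ℂ) ^ m * a (2 * m + 1)‖) : Summable (‖a ·‖) := by
  simp only [norm_neg_one_pow_mul] at he ho
  exact he.even_add_odd ho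

lemma hasSum_cosPart (ha : Summable (‖a ·‖)) :
    HasSum (fun m => (-1 : ℂ) ^ m * a (2 * m)) (cosPart a) :=
  (Summable.of_norm_bounded (ha.comp_injective (mul_right_injective₀ two_ne_zero))
    fun m => (norm_neg_one_pow_mul _ m).le).hasSum

lemma hasSum_sinPart (ha : Summable (‖a ·‖)) :
    HasSum (fun m => (-1 : ℂ) ^ m * a (2 * m + 1)) (sinPart a) :=
  (Summable.of_norm_bounded (ha.comp_injective fun _ _ h => by simpa using h)
    fun m => (norm_neg_one_pow_mul _ m).le).hasSum

lemma norm_eq_one_of_sq_eq_neg_one {w : ℂ} (hw : w ^ 2 = -1) : ‖w‖ = 1 := by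
  have : ‖w‖ ^ 2 = 1 := by rw [← norm_pow, hw, norm_neg, norm_one]
  exact (pow_eq_one_iff_of_nonneg (norm_nonneg w) two_ne_zero).mp this

lemma summable_norm_pow_mul {w : ℂ} (hw : ‖w‖ = 1) (ha : Summable (‖a ·‖)) :
    Summable fun n => ‖w ^ n * a n‖ := by
  simpa only [norm_mul, norm_pow, hw, one_pow, one_mul] using ha

lemma hasSum_pow_mul {w : ℂ} (hw : w ^ 2 = -1) (ha : Summable (‖a ·‖)) :
    HasSum (fun n => w ^ n * a n) (cosPart a + w * sinPart a) := by
  refine HasSum.even_add_odd ?_ ?_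
  · simpa only [pow_mul, hw] using hasSum_cosPart ha
  · simpa only [pow_succ, pow_mul, hw, mul_left_comm _ w, mul_assoc] using
      (hasSum_sinPart ha).mul_left w

lemma summable_norm_cauchyProduct (ha : Summable (‖a ·‖)) (hb : Summable (‖b ·‖)) :
    Summable (‖cauchyProduct a b ·‖) := by
  simpa only [cauchyProduct, mul_comm (a _)] using
    summable_norm_sum_mul_range_of_summable_norm hb ha

lemma hasSum_pow_mul_cauchyProduct {w : ℂ} (hw : w ^ 2 = -1) (ha : Summable (‖a ·‖))
    (hb : Summable (‖b ·‖)) :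
    HasSum (fun n => w ^ n * cauchyProduct a b n)
      ((cosPart a + w * sinPart a) * (cosPart b + w * sinPart b)) := by
  have hw1 := norm_eq_one_of_sq_eq_neg_one hw
  have h := hasSum_sum_range_mul_of_summable_norm
    (summable_norm_pow_mul hw1 hb) (summable_norm_pow_mul hw1 ha)
  rw [(hasSum_pow_mul hw hb).tsum_eq, (hasSum_pow_mul hw ha).tsum_eq, mul_comm] at h
  refine h.congr_fun fun n => ?_
  rw [cauchyProduct, mul_sum]
  refine sum_congr rfl fun k hk => ?_
  rw [← Nat.add_sub_cancel' (Nat.le_of_lt_succ (mem_range.mp hk)), pow_add,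
    Nat.add_sub_cancel_left]
  ring

lemma cosPart_add_mul_sinPart_cauchyProduct {w : ℂ} (hw : w ^ 2 = -1)
    (ha : Summable (‖a ·‖)) (hb : Summable (‖b ·‖)) :
    cosPart (cauchyProduct a b) + w * sinPart (cauchyProduct a b) =
      (cosPart a * cosPart b - sinPart a * sinPart b) +
        w * (sinPart a * cosPart b + cosPart a * sinPart b) := by
  rw [(hasSum_pow_mul hw (summable_norm_cauchyProduct ha hb)).unique
    (hasSum_pow_mul_cauchyProduct hw ha hb)]
  linear_combination sinPart a * sinPart b * hw

lemma cosPart_cauchyProduct (ha : Summable (‖a ·‖)) (hb : Summable (‖b ·‖)) :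
    cosPart (cauchyProduct a b) = cosPart a * cosPart b - sinPart a * sinPart b := by
  linear_combination (cosPart_add_mul_sinPart_cauchyProduct Complex.I_sq ha hb +
    cosPart_add_mul_sinPart_cauchyProduct (neg_sq Complex.I ▸ Complex.I_sq) ha hb) / 2

lemma sinPart_cauchyProduct (ha : Summable (‖a ·‖)) (hb : Summable (‖b ·‖)) :
    sinPart (cauchyProduct a b) = sinPart a * cosPart b + cosPart a * sinPart b := by
  refine mul_left_cancel₀ (mul_ne_zero two_ne_zero Complex.I_ne_zero) ?_
  linear_combination cosPart_add_mul_sinPart_cauchyProduct Complex.I_sq ha hb -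
    cosPart_add_mul_sinPart_cauchyProduct (neg_sq Complex.I ▸ Complex.I_sq) ha hb

lemma hasSum_cosPart_cauchyProduct (ha : Summable (‖a ·‖)) (hb : Summable (‖b ·‖)) :
    HasSum (fun m => (-1 : ℂ) ^ m * cauchyProduct a b (2 * m))
      (cosPart a * cosPart b - sinPart a * sinPart b) :=
  cosPart_cauchyProduct ha hb ▸ hasSum_cosPart (summable_norm_cauchyProduct ha hb)

lemma hasSum_sinPart_cauchyProduct (ha : Summable (‖a ·‖)) (hb : Summable (‖b ·‖)) :
    HasSum (fun m => (-1 : ℂ) ^ m * cauchyProduct a b (2 * m + 1))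
      (sinPart a * cosPart b + cosPart a * sinPart b) :=
  sinPart_cauchyProduct ha hb ▸ hasSum_sinPart (summable_norm_cauchyProduct ha hb)

lemma cosPart_neg_one_pow_mul : cosPart (fun n => (-1 : ℂ) ^ n * a n) = cosPart a := by
  simp only [cosPart, pow_mul, neg_one_sq, one_pow, one_mul]

lemma sinPart_neg_one_pow_mul : sinPart (fun n => (-1 : ℂ) ^ n * a n) = -sinPart a := by
  rw [sinPart, sinPart, ← tsum_neg]
  refine tsum_congr fun m => ?_
  rw [pow_succ, pow_mul, neg_one_sq, one_pow]
  ring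

end CosSinParts

def lucasExpTerm (s t u z : ℂ) (n : ℕ) : ℂ := u ^ n.choose 2 * z ^ n / lucasFact s t n

section Lucas

variable {s t : ℂ}

lemma lucasFact_ne_zero (hL : ∀ n : ℕ, 1 ≤ n → lucasSeq s t n ≠ 0) :
    ∀ n, lucasFact s t n ≠ 0
  | 0 => one_ne_zero
  | n + 1 => mul_ne_zero (lucasFact_ne_zero hL n) (hL (n + 1) n.succ_pos)

lemma mul_div_lucasFact (c u z : ℂ) (n : ℕ) :
    c * u ^ n.choose 2 * z ^ n / lucasFact s t n = c * lucasExpTerm s t u z n := by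
  rw [lucasExpTerm, mul_assoc c, mul_div_assoc]

lemma lucasCos_eq_cosPart (u z : ℂ) : lucasCos s t u z = cosPart (lucasExpTerm s t u z) := by
  simp only [lucasCos, cosPart, mul_div_lucasFact]

lemma lucasSin_eq_sinPart (u z : ℂ) : lucasSin s t u z = sinPart (lucasExpTerm s t u z) := by
  simp only [lucasSin, sinPart, mul_div_lucasFact]

lemma lucasExpTerm_neg (u z : ℂ) :
    lucasExpTerm s t u (-z) = fun n => (-1 : ℂ) ^ n * lucasExpTerm s t u z n := by
  ext n
  rw [lucasExpTerm, lucasExpTerm, neg_pow, mul_left_comm, mul_div_assoc, mul_div_assoc]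

lemma lucasPow_div_lucasFact (hL : ∀ n : ℕ, 1 ≤ n → lucasSeq s t n ≠ 0) (u v x y : ℂ) (n : ℕ) :
    lucasPow s t u v x y n / lucasFact s t n =
      cauchyProduct (lucasExpTerm s t u x) (lucasExpTerm s t v y) n := by
  rw [lucasPow, cauchyProduct, sum_div]
  refine sum_congr rfl fun k _ => ?_
  rw [lucasBinom, lucasExpTerm, lucasExpTerm]
  field_simp [lucasFact_ne_zero hL n]

end Lucas

theorem lucasSin_lucasCos_add_sub_general (s t : ℂ)
    (hL : ∀ n : ℕ, 1 ≤ n → lucasSeq s t n ≠ 0)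
    (x y u v : ℂ)
    (hconvsx : Summable fun n : ℕ =>
      ‖(-1 : ℂ) ^ n * u ^ ((2 * n + 1).choose 2) * x ^ (2 * n + 1) / lucasFact s t (2 * n + 1)‖)
    (hconvcx : Summable fun n : ℕ =>
      ‖(-1 : ℂ) ^ n * u ^ ((2 * n).choose 2) * x ^ (2 * n) / lucasFact s t (2 * n)‖)
    (hconvsy : Summable fun n : ℕ =>
      ‖(-1 : ℂ) ^ n * v ^ ((2 * n + 1).choose 2) * y ^ (2 * n + 1) / lucasFact s t (2 * n + 1)‖)
    (hconvcy : Summable fun n : ℕ =>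
      ‖(-1 : ℂ) ^ n * v ^ ((2 * n).choose 2) * y ^ (2 * n) / lucasFact s t (2 * n)‖) :
    HasSum (fun n : ℕ =>
        (-1 : ℂ) ^ n * lucasPow s t u v x y (2 * n + 1) / lucasFact s t (2 * n + 1))
      (lucasSin s t u x * lucasCos s t v y + lucasCos s t u x * lucasSin s t v y) ∧
    HasSum (fun n : ℕ =>
        (-1 : ℂ) ^ n * lucasPow s t u v x (-y) (2 * n + 1) / lucasFact s t (2 * n + 1))
      (lucasSin s t u x * lucasCos s t v y - lucasCos s t u x * lucasSin s t v y) ∧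
    HasSum (fun n : ℕ =>
        (-1 : ℂ) ^ n * lucasPow s t u v x y (2 * n) / lucasFact s t (2 * n))
      (lucasCos s t u x * lucasCos s t v y - lucasSin s t u x * lucasSin s t v y) ∧
    HasSum (fun n : ℕ =>
        (-1 : ℂ) ^ n * lucasPow s t u v x (-y) (2 * n) / lucasFact s t (2 * n))
      (lucasCos s t u x * lucasCos s t v y + lucasSin s t u x * lucasSin s t v y) := by
  simp only [mul_div_lucasFact] at hconvsx hconvcx hconvsy hconvcy
  have hx := summable_norm_of_even_odd hconvcx hconvsx
  have hy := summable_norm_of_even_odd hconvcy hconvsy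
  have hy' : Summable (‖lucasExpTerm s t v (-y) ·‖) := by
    simpa only [lucasExpTerm_neg, norm_neg_one_pow_mul] using hy
  simp only [mul_div_assoc, lucasPow_div_lucasFact hL, lucasSin_eq_sinPart, lucasCos_eq_cosPart]
  refine ⟨hasSum_sinPart_cauchyProduct hx hy, ?_, hasSum_cosPart_cauchyProduct hx hy, ?_⟩
  · simpa only [lucasExpTerm_neg, cosPart_neg_one_pow_mul, sinPart_neg_one_pow_mul, mul_neg,
      ← sub_eq_add_neg] using hasSum_sinPart_cauchyProduct hx hy'
  · simpa only [lucasExpTerm_neg, cosPart_neg_one_pow_mul, sinPart_neg_one_pow_mul, mul_neg,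
      sub_neg_eq_add] using hasSum_cosPart_cauchyProduct hx hy'

/-- Sum and difference formulas for the Lucas-Pantograph sine and cosine. -/
theorem lucasSin_lucasCos_add_sub (s t : ℂ) (hs : s ≠ 0) (ht : t ≠ 0)
    (hL : ∀ n : ℕ, 1 ≤ n → lucasSeq s t n ≠ 0)
    (x y u v : ℂ) (hu : u ≠ 0) (hv : v ≠ 0)
    (hconvsx : Summable fun n : ℕ =>
      ‖(-1 : ℂ) ^ n * u ^ ((2 * n + 1).choose 2) * x ^ (2 * n + 1) / lucasFact s t (2 * n + 1)‖)
    (hconvcx : Summable fun n : ℕ =>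
      ‖(-1 : ℂ) ^ n * u ^ ((2 * n).choose 2) * x ^ (2 * n) / lucasFact s t (2 * n)‖)
    (hconvsy : Summable fun n : ℕ =>
      ‖(-1 : ℂ) ^ n * v ^ ((2 * n + 1).choose 2) * y ^ (2 * n + 1) / lucasFact s t (2 * n + 1)‖)
    (hconvcy : Summable fun n : ℕ =>
      ‖(-1 : ℂ) ^ n * v ^ ((2 * n).choose 2) * y ^ (2 * n) / lucasFact s t (2 * n)‖) :
    HasSum (fun n : ℕ =>
        (-1 : ℂ) ^ n * lucasPow s t u v x y (2 * n + 1) / lucasFact s t (2 * n + 1))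
      (lucasSin s t u x * lucasCos s t v y + lucasCos s t u x * lucasSin s t v y) ∧
    HasSum (fun n : ℕ =>
        (-1 : ℂ) ^ n * lucasPow s t u v x (-y) (2 * n + 1) / lucasFact s t (2 * n + 1))
      (lucasSin s t u x * lucasCos s t v y - lucasCos s t u x * lucasSin s t v y) ∧
    HasSum (fun n : ℕ =>
        (-1 : ℂ) ^ n * lucasPow s t u v x y (2 * n) / lucasFact s t (2 * n))
      (lucasCos s t u x * lucasCos s t v y - lucasSin s t u x * lucasSin s t v y) ∧
    HasSum (fun n : ℕ =>
        (-1 : ℂ) ^ n * lucasPow s t u v x (-y) (2 * n) / lucasFact s t (2 * n))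
      (lucasCos s t u x * lucasCos s t v y + lucasSin s t u x * lucasSin s t v y) :=
  lucasSin_lucasCos_add_sub_general s t hL x y u v hconvsx hconvcx hconvsy hconvcy
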